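/- Let g : ℝ^d → [0,∞) be symmetric decreasing but not strictly decreasing, so that g is constant on an annulus B_R \ B_r with 0 ≤ r < R. Choose δ > 0 with r + 2δ < R − 4δ and set Ω = {x : |x| < r+2δ} ∪ {x : R−4δ < |x| < R−2δ}, f = χ_Ω, h = χ_{B_δ}. Then equality holds in Riesz' rearrangement inequality: ∫∫ f(x) g(x−y) h(y) dx dy = ∫∫ f*(x) g(x−y) h*(y) dx dy, even though f is not a.e. equal to a translate of a symmetric decreasing function. -/

import Mathlib

open MeasureTheory

/-- The centered open ball with the same measure as `Ω`. -/
def setRearrangement {n : ℕ} (Ω : Set (EuclideanSpace ℝ (Fin n))) :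
    Set (EuclideanSpace ℝ (Fin n)) :=
  {x | volume (Metric.ball (0 : EuclideanSpace ℝ (Fin n)) ‖x‖) < volume Ω}

/-- The symmetric decreasing rearrangement of a nonnegative function (layer cake). -/
noncomputable def symmDecrRearrangement {n : ℕ} (f : EuclideanSpace ℝ (Fin n) → ℝ)
    (x : EuclideanSpace ℝ (Fin n)) : ℝ :=
  ∫ t in Set.Ioi (0 : ℝ),
    (setRearrangement {y | t < |f y|}).indicator (fun _ => (1 : ℝ)) x

/-!
Write `I(A) = ∫∫ 1_A(x) g(‖x - y‖) 1_{B_δ}(y) dx dy`. The substitution `z = x - y` and Fubini give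
`I(A) = ∫ g(‖z‖) |A ∩ B(z, δ)| dz`. When `B_{r+δ} ⊆ A ⊆ B_{R-δ}`, the function
`z ↦ |A ∩ B(z, δ)|` equals `|B(z, δ)|` on `B_r`, vanishes outside `B_R` and has total integral
`|A| |B_δ|`; as `g` is constant on `B_R \ B_r`, `I(A)` depends only on `|A|`. Both `Ω` and its
rearrangement `Ω*`, a centred ball of radius between `r + 2δ` and `R - 2δ`, satisfy these
inclusions.

If `Ω` agreed a.e. with a ball `B`, then, both being open, `Ω ⊆ closure B` and `B ⊆ closure Ω`.
By strict convexity the closed ball `closure B` contains the open segment from `0 ∈ Ω` to a point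
of the outer shell of `Ω` in its interior `B`; but that segment crosses the gap annulus
`r + 2δ < ‖x‖ < R - 4δ`, which is open and disjoint from `Ω`, hence from `closure Ω`.
-/

open Metric Set

section KernelIntegrals

variable {G : Type*} [AddCommGroup G] [MeasurableSpace G] [MeasurableAdd₂ G] [MeasurableNeg G]
  {μ : Measure G} [SFinite μ] [μ.IsAddLeftInvariant] [μ.IsNegInvariant]

theorem integrable_mul_comp_sub {f h : G → ℝ} (hf : Integrable f μ) (hh : Integrable h μ) :
    Integrable (fun p : G × G => f p.1 * h (p.1 - p.2)) (μ.prod μ) := by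
  have := (hf.convolution_integrand (ContinuousLinearMap.mul ℝ ℝ) hh.comp_neg).swap
  simpa [Function.comp_def] using this

theorem integrable_mul_mul_comp_sub {f h k : G → ℝ} {C : ℝ} (hf : Integrable f μ)
    (hh : Integrable h μ) (hk : AEStronglyMeasurable k μ) (hkC : ∀ z, ‖k z‖ ≤ C) :
    Integrable (fun p : G × G => f p.1 * k p.2 * h (p.1 - p.2)) (μ.prod μ) := by
  refine ((integrable_mul_comp_sub hf hh).bdd_mul hk.comp_snd (ae_of_all _ fun p => hkC p.2)).congr
    (ae_of_all _ fun p => ?_)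
  ring

theorem integral_integral_mul_comp_sub {f h : G → ℝ} (hf : Integrable f μ) (hh : Integrable h μ) :
    ∫ z, ∫ x, f x * h (x - z) ∂μ ∂μ = (∫ x, f x ∂μ) * ∫ x, h x ∂μ := by
  rw [← integral_integral_swap (integrable_mul_comp_sub hf hh), ← integral_mul_const]
  congr 1 with x
  rw [integral_const_mul, integral_sub_left_eq_self h μ x]

theorem integral_integral_mul_kernel_mul {f h k : G → ℝ}
    (hint : Integrable (fun p : G × G => f p.1 * k p.2 * h (p.1 - p.2)) (μ.prod μ)) :
    ∫ x, ∫ y, f x * k (x - y) * h y ∂μ ∂μ = ∫ z, k z * ∫ x, f x * h (x - z) ∂μ ∂μ := by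
  calc ∫ x, ∫ y, f x * k (x - y) * h y ∂μ ∂μ
      = ∫ x, ∫ z, f x * k z * h (x - z) ∂μ ∂μ := by
        congr 1 with x
        rw [← integral_sub_left_eq_self _ μ x]
        simp only [sub_sub_cancel]
    _ = ∫ z, ∫ x, f x * k z * h (x - z) ∂μ ∂μ := integral_integral_swap hint
    _ = ∫ z, k z * ∫ x, f x * h (x - z) ∂μ ∂μ := by
        congr 1 with z
        rw [← integral_const_mul]
        congr 1 with x
        ring

end KernelIntegrals

theorem integral_mul_eq_integral_mul_of_integral_eq {α : Type*} [MeasurableSpace α]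
    {μ : Measure α} {φ F₁ F₂ : α → ℝ} {c : ℝ} (hφF₁ : Integrable (fun x => φ x * F₁ x) μ)
    (hφF₂ : Integrable (fun x => φ x * F₂ x) μ) (hF₁ : Integrable F₁ μ) (hF₂ : Integrable F₂ μ)
    (hφ : ∀ x, F₁ x ≠ F₂ x → φ x = c) (hF : ∫ x, F₁ x ∂μ = ∫ x, F₂ x ∂μ) :
    ∫ x, φ x * F₁ x ∂μ = ∫ x, φ x * F₂ x ∂μ := by
  have hdiff : (fun x => φ x * F₁ x - φ x * F₂ x) = fun x => c * (F₁ x - F₂ x) := by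
    funext x
    by_cases hx : F₁ x = F₂ x
    · simp [hx]
    · rw [hφ x hx, mul_sub]
  rw [← sub_eq_zero, ← integral_sub hφF₁ hφF₂, hdiff, integral_const_mul,
    integral_sub hF₁ hF₂, hF, sub_self, mul_zero]

theorem integrable_indicator_one {α : Type*} [MeasurableSpace α] {μ : Measure α} {D : Set α}
    (hD : MeasurableSet D) (hDμ : μ D ≠ ⊤) : Integrable (D.indicator fun _ => (1 : ℝ)) μ :=
  (integrableOn_const hDμ).integrable_indicator hD

section Balls

variable {E : Type*} [NormedAddCommGroup E]

theorem inter_ball_eq_ball_of_norm_lt {D : Set E} {r δ : ℝ} {z : E} (hD : ball 0 (r + δ) ⊆ D)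
    (hz : ‖z‖ < r) : D ∩ ball z δ = ball z δ :=
  inter_eq_right.2 ((ball_subset_ball' (by rw [dist_zero_right]; linarith)).trans hD)

theorem inter_ball_eq_empty_of_le_norm {D : Set E} {R δ : ℝ} {z : E} (hD : D ⊆ ball 0 (R - δ))
    (hz : R ≤ ‖z‖) : D ∩ ball z δ = ∅ :=
  ((ball_disjoint_ball (by rw [dist_zero_left]; linarith)).mono_left hD).inter_eq

theorem indicator_ball_zero_comp_sub {M : Type*} [Zero M] (c : M) (y : E) (s : ℝ) :
    (fun x => (ball 0 s).indicator (fun _ => c) (x - y)) = (ball y s).indicator fun _ => c := by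
  classical
  funext x
  simp only [indicator_apply, mem_ball_iff_norm, sub_zero]

variable [MeasurableSpace E] [BorelSpace E]

theorem integral_indicator_mul_indicator_ball_sub (μ : Measure E) {A : Set E}
    (hA : MeasurableSet A) (δ : ℝ) (z : E) :
    ∫ x, A.indicator (fun _ => (1 : ℝ)) x * (ball 0 δ).indicator (fun _ => (1 : ℝ)) (x - z) ∂μ
      = μ.real (A ∩ ball z δ) := by
  rw [← integral_indicator_one (hA.inter measurableSet_ball)]
  congr 1 with x
  by_cases hxA : x ∈ A <;> by_cases hxz : x ∈ ball z δ <;> simp_all [dist_eq_norm]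

variable [NormedSpace ℝ E] [FiniteDimensional ℝ E] {μ : Measure E} [μ.IsAddHaarMeasure]
  {D : Set E}

theorem integrable_measureReal_inter_ball (hD : MeasurableSet D) (hDμ : μ D ≠ ⊤) (δ : ℝ) :
    Integrable (fun z => μ.real (D ∩ ball z δ)) μ := by
  have := (integrable_mul_comp_sub (integrable_indicator_one hD hDμ)
    (integrable_indicator_one (measurableSet_ball (x := (0 : E)) (ε := δ))
      measure_ball_lt_top.ne)).integral_prod_right
  simpa only [integral_indicator_mul_indicator_ball_sub μ hD] using this

theorem integral_measureReal_inter_ball (hD : MeasurableSet D) (hDμ : μ D ≠ ⊤) (δ : ℝ) :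
    ∫ z, μ.real (D ∩ ball z δ) ∂μ = μ.real D * μ.real (ball (0 : E) δ) := by
  simp_rw [← integral_indicator_mul_indicator_ball_sub μ hD]
  rw [integral_integral_mul_comp_sub (integrable_indicator_one hD hDμ)
    (integrable_indicator_one measurableSet_ball measure_ball_lt_top.ne),
    integral_indicator hD, integral_indicator measurableSet_ball]
  simp

theorem integral_integral_indicator_mul_kernel_mul_indicator_ball (hD : MeasurableSet D)
    (hDμ : μ D ≠ ⊤) (δ : ℝ) {k : E → ℝ} {C : ℝ} (hk : AEStronglyMeasurable k μ)
    (hkC : ∀ z, ‖k z‖ ≤ C) :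
    ∫ x, ∫ y, D.indicator (fun _ => (1 : ℝ)) x * k (x - y) * (ball 0 δ).indicator (fun _ => 1) y
        ∂μ ∂μ
      = ∫ z, k z * μ.real (D ∩ ball z δ) ∂μ := by
  rw [integral_integral_mul_kernel_mul (integrable_mul_mul_comp_sub
    (integrable_indicator_one hD hDμ)
    (integrable_indicator_one measurableSet_ball measure_ball_lt_top.ne) hk hkC)]
  simp_rw [integral_indicator_mul_indicator_ball_sub μ hD]

theorem integral_integral_indicator_mul_kernel_mul_indicator_ball_eq (δ : ℝ) {k : E → ℝ}
    {r R c C : ℝ} (hk : AEStronglyMeasurable k μ) (hkC : ∀ z, ‖k z‖ ≤ C)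
    (hkc : ∀ z, r ≤ ‖z‖ → ‖z‖ < R → k z = c) {A B : Set E}
    (hA : MeasurableSet A) (hB : MeasurableSet B) (hAB : μ A = μ B)
    (hA₁ : ball 0 (r + δ) ⊆ A) (hA₂ : A ⊆ ball 0 (R - δ))
    (hB₁ : ball 0 (r + δ) ⊆ B) (hB₂ : B ⊆ ball 0 (R - δ)) :
    ∫ x, ∫ y, A.indicator (fun _ => (1 : ℝ)) x * k (x - y) * (ball 0 δ).indicator (fun _ => 1) y
        ∂μ ∂μ
      = ∫ x, ∫ y, B.indicator (fun _ => (1 : ℝ)) x * k (x - y) * (ball 0 δ).indicator (fun _ => 1) y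
        ∂μ ∂μ := by
  have hAμ : μ A ≠ ⊤ := measure_ne_top_of_subset hA₂ measure_ball_lt_top.ne
  have hBμ : μ B ≠ ⊤ := hAB ▸ hAμ
  rw [integral_integral_indicator_mul_kernel_mul_indicator_ball hA hAμ δ hk hkC,
    integral_integral_indicator_mul_kernel_mul_indicator_ball hB hBμ δ hk hkC]
  refine integral_mul_eq_integral_mul_of_integral_eq
    ((integrable_measureReal_inter_ball hA hAμ δ).bdd_mul hk (ae_of_all _ hkC))
    ((integrable_measureReal_inter_ball hB hBμ δ).bdd_mul hk (ae_of_all _ hkC))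
    (integrable_measureReal_inter_ball hA hAμ δ) (integrable_measureReal_inter_ball hB hBμ δ)
    (fun z hz => hkc z ?_ ?_) ?_
  · by_contra! hzr
    rw [inter_ball_eq_ball_of_norm_lt hA₁ hzr, inter_ball_eq_ball_of_norm_lt hB₁ hzr] at hz
    exact hz rfl
  · by_contra! hzR
    rw [inter_ball_eq_empty_of_le_norm hA₂ hzR, inter_ball_eq_empty_of_le_norm hB₂ hzR] at hz
    exact hz rfl
  · rw [integral_measureReal_inter_ball hA hAμ, integral_measureReal_inter_ball hB hBμ,
      measureReal_def μ A, hAB, ← measureReal_def]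

end Balls

section BallVolume

variable {E : Type*} [NormedAddCommGroup E] [NormedSpace ℝ E] [MeasurableSpace E] [BorelSpace E]
  [FiniteDimensional ℝ E] [Nontrivial E] (μ : Measure E) [μ.IsAddHaarMeasure]

theorem addHaar_ball_lt_addHaar_ball_iff (x y : E) {a b : ℝ} (ha : 0 ≤ a) (hb : 0 ≤ b) :
    μ (ball x a) < μ (ball y b) ↔ a < b := by
  rw [Measure.addHaar_ball μ x ha, Measure.addHaar_ball μ y hb,
    ENNReal.mul_lt_mul_iff_left (measure_ball_pos μ _ one_pos).ne' measure_ball_lt_top.ne,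
    ENNReal.ofReal_lt_ofReal_iff_of_nonneg (pow_nonneg ha _),
    pow_lt_pow_iff_left₀ ha hb Module.finrank_pos.ne']

theorem exists_addHaar_ball_eq (x : E) {a b : ℝ} (ha : 0 ≤ a) (hab : a ≤ b) {m : ENNReal}
    (hm : m ∈ Icc (μ (ball x a)) (μ (ball x b))) : ∃ s ∈ Icc a b, μ (ball x s) = m := by
  have hcont : ContinuousOn (fun t => μ (ball x t)) (Icc a b) := by
    refine ContinuousOn.congr
      (f := fun t => μ (ball 0 1) * ENNReal.ofReal (t ^ Module.finrank ℝ E)) ?_ fun t ht => ?_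
    · exact ((ENNReal.continuous_const_mul measure_ball_lt_top.ne).comp
        (ENNReal.continuous_ofReal.comp (continuous_pow _))).continuousOn
    · rw [Measure.addHaar_ball μ x (ha.trans ht.1), mul_comm]
  exact intermediate_value_Icc hab hcont hm

end BallVolume

theorem setRearrangement_eq_ball {n : ℕ} [Nontrivial (EuclideanSpace ℝ (Fin n))]
    {A : Set (EuclideanSpace ℝ (Fin n))} {s : ℝ} (hs : 0 ≤ s)
    (hA : volume A = volume (ball (0 : EuclideanSpace ℝ (Fin n)) s)) :
    setRearrangement A = ball 0 s := by
  ext x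
  rw [mem_ball_zero_iff,
    ← addHaar_ball_lt_addHaar_ball_iff volume (0 : EuclideanSpace ℝ (Fin n)) 0 (norm_nonneg x) hs,
    ← hA]
  rfl

theorem symmDecrRearrangement_indicator {n : ℕ} (A : Set (EuclideanSpace ℝ (Fin n))) :
    symmDecrRearrangement (A.indicator fun _ => (1 : ℝ))
      = (setRearrangement A).indicator fun _ => (1 : ℝ) := by
  funext x
  have hlevel : ∀ t ∈ Ioi (0 : ℝ),
      (setRearrangement {y | t < |A.indicator (fun _ => (1 : ℝ)) y|}).indicator (fun _ => 1) x
        = (Iio 1).indicator (fun _ => (setRearrangement A).indicator (fun _ => (1 : ℝ)) x) t := by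
    intro t (ht : 0 < t)
    by_cases h1 : t < 1
    · have : {y | t < |A.indicator (fun _ => (1 : ℝ)) y|} = A := by
        ext y
        by_cases hy : y ∈ A <;> simp [hy, h1, ht.le]
      rw [this, indicator_of_mem (show t ∈ Iio 1 from h1)]
    · have : {y | t < |A.indicator (fun _ => (1 : ℝ)) y|} = ∅ := by
        ext y
        by_cases hy : y ∈ A <;> simp [hy, not_lt.1 h1, ht.le]
      rw [this, indicator_of_notMem (show t ∉ Iio 1 from h1)]
      simp [setRearrangement]
  rw [symmDecrRearrangement, setIntegral_congr_fun measurableSet_Ioi hlevel,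
    setIntegral_indicator measurableSet_Iio, Ioi_inter_Iio, setIntegral_const]
  simp

theorem IsOpen.subset_closure_of_indicator_ae_eq {X : Type*} [TopologicalSpace X]
    [MeasurableSpace X] {μ : Measure X} [μ.IsOpenPosMeasure] {U V : Set X} (hU : IsOpen U)
    (h : U.indicator (fun _ => (1 : ℝ)) =ᵐ[μ] V.indicator fun _ => (1 : ℝ)) :
    U ⊆ closure V := by
  have hnull : μ (U \ closure V) = 0 := measure_mono_null (fun x hx => by
    simp [indicator_of_mem hx.1, indicator_of_notMem (notMem_of_notMem_closure hx.2)])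
    (ae_iff.1 h)
  exact sdiff_eq_empty.1 ((hU.sdiff isClosed_closure).measure_eq_zero_iff μ |>.1 hnull)

theorem not_indicator_ae_eq_indicator_ball {E : Type*} [NormedAddCommGroup E] [NormedSpace ℝ E]
    [StrictConvexSpace ℝ E] [MeasurableSpace E] {μ : Measure E} [μ.IsOpenPosMeasure]
    {U : Set E} (hU : IsOpen U) {u v w : E} (hu : u ∈ U) (hv : v ∈ U) (huv : u ≠ v)
    (hw : w ∈ openSegment ℝ u v) (hwU : w ∉ closure U) (y : E) (s : ℝ) :
    ¬ U.indicator (fun _ => (1 : ℝ)) =ᵐ[μ] (ball y s).indicator fun _ => (1 : ℝ) := by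
  intro h
  have : Nontrivial E := ⟨u, v, huv⟩
  have hU_sub : U ⊆ closedBall y s :=
    (hU.subset_closure_of_indicator_ae_eq h).trans closure_ball_subset_closedBall
  have hw_ball : w ∈ ball y s := by
    rw [← interior_closedBall']
    exact (strictConvex_closedBall ℝ y s).openSegment_subset (hU_sub hu) (hU_sub hv) huv hw
  exact hwU (isOpen_ball.subset_closure_of_indicator_ae_eq h.symm hw_ball)

section BallUnionAnnulus

variable {E : Type*} [NormedAddCommGroup E]

def ballUnionAnnulus (a b c : ℝ) : Set E := {x | ‖x‖ < a} ∪ {x | b < ‖x‖ ∧ ‖x‖ < c}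

theorem isOpen_ballUnionAnnulus (a b c : ℝ) : IsOpen (ballUnionAnnulus a b c : Set E) :=
  (isOpen_lt continuous_norm continuous_const).union <|
    (isOpen_lt continuous_const continuous_norm).inter (isOpen_lt continuous_norm continuous_const)

theorem ball_subset_ballUnionAnnulus (a b c : ℝ) : ball 0 a ⊆ (ballUnionAnnulus a b c : Set E) :=
  fun _ hx => Or.inl (mem_ball_zero_iff.1 hx)

theorem ballUnionAnnulus_subset_ball {a b c : ℝ} (hac : a ≤ c) :
    (ballUnionAnnulus a b c : Set E) ⊆ ball 0 c := by
  rintro x (hx | hx) <;> rw [mem_ball_zero_iff]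
  exacts [hx.trans_le hac, hx.2]

theorem not_indicator_ballUnionAnnulus_ae_eq_indicator_ball [NormedSpace ℝ E] [Nontrivial E]
    [StrictConvexSpace ℝ E] [MeasurableSpace E]
    {μ : Measure E} [μ.IsOpenPosMeasure] {a b c : ℝ} (ha : 0 < a) (hab : a < b) (hbc : b < c)
    (y : E) (s : ℝ) :
    ¬ (ballUnionAnnulus a b c).indicator (fun _ => (1 : ℝ)) =ᵐ[μ]
      (ball y s).indicator fun _ => (1 : ℝ) := by
  obtain ⟨v, hv⟩ := exists_norm_eq E (by linarith : 0 ≤ (b + c) / 2)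
  set θ := (a + b) / (b + c)
  have hθ₀ : 0 < θ := div_pos (by linarith) (by linarith)
  have hθ₁ : θ < 1 := (div_lt_one (by linarith)).2 (by linarith)
  have hθv : ‖θ • v‖ = (a + b) / 2 := by
    rw [norm_smul, hv, Real.norm_of_nonneg hθ₀.le, mul_div_assoc', div_mul_cancel₀ _ (by linarith)]
  have hgap : Disjoint (ballUnionAnnulus a b c) {x : E | a < ‖x‖ ∧ ‖x‖ < b} := by
    rw [disjoint_left]
    rintro x (hx | ⟨hx, -⟩) ⟨hx₁, hx₂⟩
    exacts [lt_asymm hx hx₁, lt_asymm hx hx₂]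
  refine not_indicator_ae_eq_indicator_ball (isOpen_ballUnionAnnulus a b c)
    (u := 0) (v := v) (w := θ • v) (Or.inl (by simpa using ha))
    (Or.inr ⟨by linarith, by linarith⟩) ?_ ⟨1 - θ, θ, by linarith, hθ₀, by ring, by simp⟩ ?_ y s
  · rintro rfl
    rw [norm_zero] at hv
    linarith
  · intro hw
    exact (hgap.closure_left ((isOpen_lt continuous_const continuous_norm).inter
      (isOpen_lt continuous_norm continuous_const))).ne_of_mem hw
      (show θ • v ∈ {x : E | a < ‖x‖ ∧ ‖x‖ < b} from ⟨by linarith, by linarith⟩) rfl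

end BallUnionAnnulus

theorem AntitoneOn.measurable_comp_norm {E : Type*} [SeminormedAddCommGroup E] [MeasurableSpace E]
    [OpensMeasurableSpace E] {g : ℝ → ℝ} (hg : AntitoneOn g (Ici 0)) :
    Measurable fun z : E => g ‖z‖ := by
  have hanti : Antitone fun t => g (max t 0) := fun a b hab =>
    hg (le_max_right a 0) (le_max_right b 0) (max_le_max hab le_rfl)
  simpa [Function.comp_def] using hanti.measurable.comp (continuous_norm (E := E)).measurable

theorem AntitoneOn.norm_le_apply_zero {g : ℝ → ℝ} (hg : AntitoneOn g (Ici 0))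
    (hg₀ : ∀ t, 0 ≤ g t) {t : ℝ} (ht : 0 ≤ t) : ‖g t‖ ≤ g 0 := by
  rw [Real.norm_of_nonneg (hg₀ t)]
  exact hg self_mem_Ici ht ht

theorem riesz_equality_without_strict_monotonicity_general
    (d : ℕ) (hd : 0 < d) (g₀ : ℝ → ℝ) (r R δ cst : ℝ)
    (hr : 0 ≤ r) (hδ : 0 < δ) (hgap : r + 2 * δ < R - 4 * δ)
    (hg₀anti : AntitoneOn g₀ (Set.Ici 0))
    (hg₀nonneg : ∀ t, 0 ≤ g₀ t)
    (hconst : ∀ t : ℝ, r ≤ t → t < R → g₀ t = cst)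
    (Ω : Set (EuclideanSpace ℝ (Fin d)))
    (hΩ : Ω = {x | ‖x‖ < r + 2 * δ} ∪ {x | R - 4 * δ < ‖x‖ ∧ ‖x‖ < R - 2 * δ})
    (f h : EuclideanSpace ℝ (Fin d) → ℝ)
    (hf : f = Ω.indicator fun _ => (1 : ℝ))
    (hh : h = (Metric.ball (0 : EuclideanSpace ℝ (Fin d)) δ).indicator fun _ => (1 : ℝ)) :
    (∫ x, ∫ y, f x * g₀ ‖x - y‖ * h y)
        = ∫ x, ∫ y, symmDecrRearrangement f x * g₀ ‖x - y‖ * symmDecrRearrangement h y ∧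
      ¬ ∃ y₀ : EuclideanSpace ℝ (Fin d),
          f =ᵐ[volume] fun x => symmDecrRearrangement f (x - y₀) := by
  have : Nontrivial (EuclideanSpace ℝ (Fin d)) :=
    Module.nontrivial_of_finrank_pos (by rwa [finrank_euclideanSpace_fin])
  change Ω = ballUnionAnnulus (r + 2 * δ) (R - 4 * δ) (R - 2 * δ) at hΩ
  subst hΩ hf hh
  have hΩ₁ := ball_subset_ballUnionAnnulus (E := EuclideanSpace ℝ (Fin d))
    (r + 2 * δ) (R - 4 * δ) (R - 2 * δ)
  have hΩ₂ := ballUnionAnnulus_subset_ball (E := EuclideanSpace ℝ (Fin d))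
    (b := R - 4 * δ) (by linarith : r + 2 * δ ≤ R - 2 * δ)
  obtain ⟨s, ⟨hs₁, hs₂⟩, hΩs⟩ := exists_addHaar_ball_eq volume 0 (by linarith) (by linarith)
    ⟨measure_mono hΩ₁, measure_mono hΩ₂⟩
  rw [symmDecrRearrangement_indicator, symmDecrRearrangement_indicator,
    setRearrangement_eq_ball (by linarith) hΩs.symm, setRearrangement_eq_ball hδ.le rfl]
  constructor
  · exact integral_integral_indicator_mul_kernel_mul_indicator_ball_eq δ
      hg₀anti.measurable_comp_norm.aestronglyMeasurable
      (fun z => hg₀anti.norm_le_apply_zero hg₀nonneg (norm_nonneg z)) (fun z => hconst ‖z‖)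
      (isOpen_ballUnionAnnulus _ _ _).measurableSet measurableSet_ball hΩs.symm
      ((ball_subset_ball (by linarith)).trans hΩ₁) (hΩ₂.trans (ball_subset_ball (by linarith)))
      (ball_subset_ball (by linarith)) (ball_subset_ball (by linarith))
  · rintro ⟨y₀, hae⟩
    rw [indicator_ball_zero_comp_sub] at hae
    exact not_indicator_ballUnionAnnulus_ae_eq_indicator_ball (by linarith) hgap (by linarith)
      y₀ s hae

theorem riesz_equality_without_strict_monotonicity
    (d : ℕ) (hd : 0 < d) (g₀ : ℝ → ℝ) (r R δ cst : ℝ)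
    (hr : 0 ≤ r) (hrR : r < R) (hδ : 0 < δ) (hgap : r + 2 * δ < R - 4 * δ)
    (hg₀anti : AntitoneOn g₀ (Set.Ici 0))
    (hg₀nonneg : ∀ t, 0 ≤ g₀ t)
    (hconst : ∀ t : ℝ, r ≤ t → t < R → g₀ t = cst)
    (Ω : Set (EuclideanSpace ℝ (Fin d)))
    (hΩ : Ω = {x | ‖x‖ < r + 2 * δ} ∪ {x | R - 4 * δ < ‖x‖ ∧ ‖x‖ < R - 2 * δ})
    (f h : EuclideanSpace ℝ (Fin d) → ℝ)
    (hf : f = Ω.indicator fun _ => (1 : ℝ))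
    (hh : h = (Metric.ball (0 : EuclideanSpace ℝ (Fin d)) δ).indicator fun _ => (1 : ℝ)) :
    (∫ x, ∫ y, f x * g₀ ‖x - y‖ * h y)
        = ∫ x, ∫ y, symmDecrRearrangement f x * g₀ ‖x - y‖ * symmDecrRearrangement h y ∧
      ¬ ∃ y₀ : EuclideanSpace ℝ (Fin d),
          f =ᵐ[volume] fun x => symmDecrRearrangement f (x - y₀) :=
  riesz_equality_without_strict_monotonicity_general d hd g₀ r R δ cst hr hδ hgap hg₀anti hg₀nonneg
    hconst Ω hΩ f h hf hh
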